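/- Let F : ℝ^d → ℝ be convex with minimum F_* attained, and suppose the proximal gradient iteration x_{τ+1} = prox_{g/L}(x_τ − ∇f(x_τ)/L) (F = f + g, f convex L-smooth, g proper convex lsc) is run. Then for t = 2j, min_{1≤τ≤t} ‖G(x_τ)‖² ≤ (2L/j)(F(x_j) − F_*), where G(x) = L(x − prox_{g/L}(x − ∇f(x)/L)). -/

import Mathlib

/-!
A proximal gradient step decreases `F = f + g` by at least `(L/2)‖y - T y‖²`: the descent lemma
for the `L`-smooth `f` bounds `f (T y)` from above, and the optimality of `T y` for the prox
objective, tested along the segment towards `y` and using convexity of `g`, bounds `g (T y)`.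
Summing this decrease over `τ = j, …, 2j - 1` telescopes to
`2L (F x_j - F x_{2j}) ≤ 2L (F x_j - F_*)`, and each of the `j` summands dominates the minimum.
-/

open Filter Topology Finset
open scoped InnerProductSpace

section InnerProductSpace

variable {E : Type*} [NormedAddCommGroup E] [InnerProductSpace ℝ E]

theorem le_add_inner_add_sq_of_lipschitz_gradient [CompleteSpace E] {f : E → ℝ} {f' : E → E}
    {L : ℝ} (hgrad : ∀ x, HasGradientAt f (f' x) x)
    (hlip : ∀ x y, ‖f' x - f' y‖ ≤ L * ‖x - y‖) (x y : E) :
    f y ≤ f x + ⟪f' x, y - x⟫_ℝ + L / 2 * ‖y - x‖ ^ 2 := by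
  set v := y - x
  set φ : ℝ → ℝ := fun t => f (x + t • v) - t * ⟪f' x, v⟫_ℝ - L / 2 * t ^ 2 * ‖v‖ ^ 2
  have hφ : ∀ t : ℝ, HasDerivAt φ (⟪f' (x + t • v) - f' x, v⟫_ℝ - L * t * ‖v‖ ^ 2) t := by
    intro t
    have hline : HasDerivAt (fun t : ℝ => x + t • v) v t := by
      simpa using ((hasDerivAt_id t).smul_const v).const_add x
    have hf : HasDerivAt (fun t : ℝ => f (x + t • v)) ⟪f' (x + t • v), v⟫_ℝ t := by
      have := (hgrad (x + t • v)).hasFDerivAt.comp_hasDerivAt t hline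
      simp only [InnerProductSpace.toDual_apply_apply] at this
      exact this
    have hq : HasDerivAt (fun t : ℝ => L / 2 * t ^ 2 * ‖v‖ ^ 2) (L * t * ‖v‖ ^ 2) t := by
      refine (((hasDerivAt_pow 2 t).const_mul (L / 2)).mul_const (‖v‖ ^ 2)).congr_deriv ?_
      simp only [Nat.cast_ofNat, Nat.add_one_sub_one, pow_one]
      ring
    exact ((hf.sub (hasDerivAt_mul_const _)).sub hq).congr_deriv (by rw [inner_sub_left])
  have hφ_anti : AntitoneOn φ (Set.Icc 0 1) := by
    refine antitoneOn_of_hasDerivWithinAt_nonpos (convex_Icc 0 1)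
      (fun t _ => (hφ t).continuousAt.continuousWithinAt) (fun t _ => (hφ t).hasDerivWithinAt) ?_
    intro t ht
    rw [interior_Icc] at ht
    have hstep : ‖f' (x + t • v) - f' x‖ ≤ L * (t * ‖v‖) := by
      simpa [norm_smul, abs_of_pos ht.1] using hlip (x + t • v) x
    calc ⟪f' (x + t • v) - f' x, v⟫_ℝ - L * t * ‖v‖ ^ 2
        ≤ ‖f' (x + t • v) - f' x‖ * ‖v‖ - L * t * ‖v‖ ^ 2 := by gcongr; exact real_inner_le_norm _ _
      _ ≤ 0 := by nlinarith [norm_nonneg v]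
  have hφ01 := hφ_anti (by simp) (by simp) zero_le_one
  simp only [φ, one_smul, zero_smul, add_zero, one_mul, one_pow, mul_one, zero_mul,
    zero_pow two_ne_zero, mul_zero, sub_zero, v, add_sub_cancel] at hφ01
  linarith

theorem inner_sub_le_of_forall_prox_le {g : E → ℝ} (hg : ConvexOn ℝ Set.univ g) {c : ℝ}
    (hc : 0 ≤ c) {w p : E}
    (hp : ∀ z, 1 / 2 * ‖p - w‖ ^ 2 + c * g p ≤ 1 / 2 * ‖z - w‖ ^ 2 + c * g z) (z : E) :
    ⟪w - p, z - p⟫_ℝ ≤ c * (g z - g p) := by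
  set A := ⟪p - w, z - p⟫_ℝ + c * (g z - g p)
  have hsegment : ∀ t : ℝ, 0 < t → t < 1 → 0 ≤ A + t / 2 * ‖z - p‖ ^ 2 := by
    intro t ht0 ht1
    have hmin := hp (p + t • (z - p))
    have hconv : g (p + t • (z - p)) ≤ (1 - t) * g p + t * g z := by
      have hcomb : p + t • (z - p) = (1 - t) • p + t • z := by module
      rw [hcomb]
      exact hg.2 (Set.mem_univ p) (Set.mem_univ z) (by linarith) ht0.le (by ring)
    have hsq : ‖p + t • (z - p) - w‖ ^ 2
        = ‖p - w‖ ^ 2 + 2 * (t * ⟪p - w, z - p⟫_ℝ) + t ^ 2 * ‖z - p‖ ^ 2 := by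
      rw [show p + t • (z - p) - w = (p - w) + t • (z - p) by module, norm_add_sq_real,
        real_inner_smul_right, norm_smul, Real.norm_eq_abs, mul_pow, sq_abs]
    have hscaled : 0 ≤ t * (A + t / 2 * ‖z - p‖ ^ 2) := by
      nlinarith [mul_le_mul_of_nonneg_left hconv hc]
    exact nonneg_of_mul_nonneg_right hscaled ht0
  have hlim : Tendsto (fun t : ℝ => A + t / 2 * ‖z - p‖ ^ 2) (𝓝[>] 0) (𝓝 A) := by
    refine tendsto_nhdsWithin_of_tendsto_nhds ?_
    simpa using ((continuous_id.div_const 2).mul continuous_const).const_add A |>.tendsto 0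
  have hA : 0 ≤ A := ge_of_tendsto hlim <| by
    filter_upwards [Ioo_mem_nhdsGT one_pos] with t ht using hsegment t ht.1 ht.2
  have hflip : ⟪w - p, z - p⟫_ℝ = -⟪p - w, z - p⟫_ℝ := by
    rw [← inner_neg_left, neg_sub]
  linarith

theorem prox_grad_sufficient_decrease [CompleteSpace E] {f g : E → ℝ} {f' : E → E} {L : ℝ}
    (hL : 0 < L) (hgrad : ∀ x, HasGradientAt f (f' x) x)
    (hlip : ∀ x y, ‖f' x - f' y‖ ≤ L * ‖x - y‖) (hg : ConvexOn ℝ Set.univ g) {T : E → E}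
    (hT : ∀ x z, 1 / 2 * ‖T x - (x - (1 / L) • f' x)‖ ^ 2 + (1 / L) * g (T x)
        ≤ 1 / 2 * ‖z - (x - (1 / L) • f' x)‖ ^ 2 + (1 / L) * g z) (y : E) :
    f (T y) + g (T y) + L / 2 * ‖y - T y‖ ^ 2 ≤ f y + g y := by
  have hprox := inner_sub_le_of_forall_prox_le hg (by positivity) (hT y) y
  have hinner : ⟪y - (1 / L) • f' y - T y, y - T y⟫_ℝ
      = ‖y - T y‖ ^ 2 - 1 / L * ⟪f' y, y - T y⟫_ℝ := by
    rw [sub_right_comm, inner_sub_left, real_inner_smul_left, real_inner_self_eq_norm_sq]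
  have hdescent := le_add_inner_add_sq_of_lipschitz_gradient hgrad hlip y (T y)
  rw [← neg_sub y, inner_neg_right, norm_neg] at hdescent
  rw [hinner] at hprox
  have hg_step : L * ‖y - T y‖ ^ 2 ≤ ⟪f' y, y - T y⟫_ℝ + (g y - g (T y)) := by
    have hscaled := mul_le_mul_of_nonneg_left hprox hL.le
    field_simp at hscaled
    linarith
  linarith

end InnerProductSpace

theorem inf'_Ico_mul_le_sub {r a : ℕ → ℝ} (hr : ∀ n, r n ≤ a n - a (n + 1)) {m n : ℕ}
    (hmn : m < n) : (Ico m n).inf' (nonempty_Ico.2 hmn) r * (n - m : ℕ) ≤ a m - a n := by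
  calc (Ico m n).inf' (nonempty_Ico.2 hmn) r * (n - m : ℕ)
      = #(Ico m n) • (Ico m n).inf' (nonempty_Ico.2 hmn) r := by
        rw [Nat.card_Ico, nsmul_eq_mul, mul_comm]
    _ ≤ ∑ k ∈ Ico m n, r k := card_nsmul_le_sum _ _ _ fun k hk => inf'_le _ hk
    _ ≤ ∑ k ∈ Ico m n, (a k - a (k + 1)) := sum_le_sum fun k _ => hr k
    _ = a m - a n := by
        rw [← neg_sub, ← sum_Ico_sub a hmn.le, ← sum_neg_distrib]
        simp only [neg_sub]

theorem pg_min_prox_grad_norm_bound {d : ℕ} (L : ℝ) (hL : 0 < L)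
    (f g : EuclideanSpace ℝ (Fin d) → ℝ)
    (f' : EuclideanSpace ℝ (Fin d) → EuclideanSpace ℝ (Fin d))
    (hgrad : ∀ x, HasGradientAt f (f' x) x)
    (hlip : ∀ x y, ‖f' x - f' y‖ ≤ L * ‖x - y‖)
    (hconvg : ConvexOn ℝ Set.univ g)
    (T : EuclideanSpace ℝ (Fin d) → EuclideanSpace ℝ (Fin d))
    (hT : ∀ x z, 1 / 2 * ‖T x - (x - (1 / L) • f' x)‖ ^ 2 + (1 / L) * g (T x)
        ≤ 1 / 2 * ‖z - (x - (1 / L) • f' x)‖ ^ 2 + (1 / L) * g z)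
    (Fstar : ℝ) (hFstar : ∀ y, Fstar ≤ f y + g y)
    (x : ℕ → EuclideanSpace ℝ (Fin d)) (hiter : ∀ τ, x (τ + 1) = T (x τ))
    (j : ℕ) (hj : 1 ≤ j) :
    (Finset.Icc 1 (2 * j)).inf' (Finset.nonempty_Icc.mpr (by omega))
        (fun τ => ‖L • (x τ - T (x τ))‖ ^ 2)
      ≤ 2 * L / (j : ℝ) * ((f (x j) + g (x j)) - Fstar) := by
  set F := fun τ => f (x τ) + g (x τ)
  have hdecrease : ∀ τ, ‖L • (x τ - T (x τ))‖ ^ 2 ≤ 2 * L * F τ - 2 * L * F (τ + 1) := by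
    intro τ
    have hstep := prox_grad_sufficient_decrease hL hgrad hlip hconvg hT (x τ)
    rw [norm_smul, mul_pow, Real.norm_eq_abs, sq_abs]
    simp only [F, hiter τ]
    nlinarith
  have hjj : j < 2 * j := by omega
  have htelescope := inf'_Ico_mul_le_sub hdecrease hjj
  have hsub : Ico j (2 * j) ⊆ Icc 1 (2 * j) := fun τ hτ => by
    simp only [mem_Ico, mem_Icc] at hτ ⊢; omega
  have hj' : (0 : ℝ) < j := by exact_mod_cast hj
  rw [show 2 * j - j = j by omega] at htelescope
  rw [div_mul_eq_mul_div, le_div_iff₀ hj']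
  calc _ ≤ (Ico j (2 * j)).inf' (nonempty_Ico.2 hjj) (fun τ => ‖L • (x τ - T (x τ))‖ ^ 2) * j :=
        by gcongr
    _ ≤ 2 * L * F j - 2 * L * F (2 * j) := htelescope
    _ ≤ 2 * L * (F j - Fstar) := by nlinarith [hFstar (x (2 * j))]
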